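/- arXiv:2011.05909 — 5 statements merged into one kernel-verified Lean document; each statement's English description precedes it below -/
import Mathlib

section
/- If F is a nonnegative harmonic function on the upper half plane that is 2πb-periodic in u, then for every v ≥ 0 the average (1/(2πb))∫_0^{2πb} F(u,v) du equals a_0 + b_0 v for some constants a_0, b_0 ≥ 0; in particular the average is an affine, nondecreasing-or-linear function of v with nonnegative coefficients. -/
open Real MeasureTheory

lemma aux_vert {f : ℝ × ℝ → ℝ} {U : Set (ℝ × ℝ)} (hU : IsOpen U)
    (hsmooth : ContDiffOn ℝ (⊤ : ℕ∞) f U) {u v : ℝ}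
    (hp : (u, v) ∈ U) :
    HasDerivAt (fun w => f (u, w)) (fderiv ℝ f (u, v) (0, 1)) v := by
  have hd : DifferentiableAt ℝ f (u, v) :=
    (hsmooth.contDiffAt (hU.mem_nhds hp)).differentiableAt (by simp)
  have hline : HasDerivAt (fun w : ℝ => ((u, w) : ℝ × ℝ)) ((0 : ℝ), (1 : ℝ)) v :=
    (hasDerivAt_const v u).prodMk (hasDerivAt_id v)
  exact hd.hasFDerivAt.comp_hasDerivAt v hline

lemma aux_horiz {f : ℝ × ℝ → ℝ} {U : Set (ℝ × ℝ)} (hU : IsOpen U)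
    (hsmooth : ContDiffOn ℝ (⊤ : ℕ∞) f U) {u v : ℝ}
    (hp : (u, v) ∈ U) :
    HasDerivAt (fun w => f (w, v)) (fderiv ℝ f (u, v) (1, 0)) u := by
  have hd : DifferentiableAt ℝ f (u, v) :=
    (hsmooth.contDiffAt (hU.mem_nhds hp)).differentiableAt (by simp)
  have hline : HasDerivAt (fun w : ℝ => ((w, v) : ℝ × ℝ)) ((1 : ℝ), (0 : ℝ)) u :=
    (hasDerivAt_id u).prodMk (hasDerivAt_const u v)
  exact hd.hasFDerivAt.comp_hasDerivAt u hline

/-- If `F` is a nonnegative harmonic function on a neighborhood of the closed upper half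
plane, `2πb`-periodic in `u`, then for every `v ≥ 0` the average
`(1/(2πb)) ∫_0^{2πb} F(u,v) du` equals `a₀ + b₀ v` for some constants `a₀, b₀ ≥ 0`. -/
theorem average_affine_nonneg
    (F : ℝ → ℝ → ℝ) (U : Set (ℝ × ℝ)) (hU : IsOpen U)
    (hUH : {p : ℝ × ℝ | 0 ≤ p.2} ⊆ U)
    (hsmooth : ContDiffOn ℝ (⊤ : ℕ∞) (fun p : ℝ × ℝ => F p.1 p.2) U)
    (hharm : ∀ p ∈ U,
      deriv (deriv (fun u => F u p.2)) p.1 + deriv (deriv (fun v => F p.1 v)) p.2 = 0)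
    (hpos : ∀ u v : ℝ, 0 ≤ v → 0 ≤ F u v)
    (b : ℕ) (hb : 0 < b)
    (hper : ∀ u v : ℝ, F (u + 2 * π * b) v = F u v) :
    ∃ a₀ b₀ : ℝ, 0 ≤ a₀ ∧ 0 ≤ b₀ ∧ ∀ v : ℝ, 0 ≤ v →
      (1 / (2 * π * b)) * ∫ u in (0:ℝ)..(2 * π * b), F u v = a₀ + b₀ * v := by
  set T : ℝ := 2 * π * b with hTdef
  have hTpos : 0 < T := by
    have : (0:ℝ) < (b:ℝ) := by exact_mod_cast hb
    positivity
  set f : ℝ × ℝ → ℝ := fun p => F p.1 p.2 with hfdef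
  set g : ℝ × ℝ → ℝ := fun p => fderiv ℝ f p (0, 1) with hgdef
  set h : ℝ × ℝ → ℝ := fun p => fderiv ℝ f p (1, 0) with hhdef
  -- smoothness of first partials
  have hfderiv : ContDiffOn ℝ (⊤ : ℕ∞) (fderiv ℝ f) U := hsmooth.fderiv_of_isOpen hU (mod_cast le_top)
  have hg : ContDiffOn ℝ (⊤ : ℕ∞) g U := hfderiv.clm_apply contDiffOn_const
  have hh : ContDiffOn ℝ (⊤ : ℕ∞) h U := hfderiv.clm_apply contDiffOn_const
  set g2 : ℝ × ℝ → ℝ := fun p => fderiv ℝ g p (0, 1) with hg2def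
  set h2 : ℝ × ℝ → ℝ := fun p => fderiv ℝ h p (1, 0) with hh2def
  have hg2 : ContDiffOn ℝ (⊤ : ℕ∞) g2 U := (hg.fderiv_of_isOpen hU (mod_cast le_top)).clm_apply contDiffOn_const
  have hh2 : ContDiffOn ℝ (⊤ : ℕ∞) h2 U := (hh.fderiv_of_isOpen hU (mod_cast le_top)).clm_apply contDiffOn_const
  -- first partial derivatives as HasDerivAt
  have D1v : ∀ q ∈ U, HasDerivAt (fun w => f (q.1, w)) (g q) q.2 := by
    rintro ⟨u, v⟩ hq
    exact aux_vert hU hsmooth hq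
  have D1u : ∀ q ∈ U, HasDerivAt (fun w => f (w, q.2)) (h q) q.1 := by
    rintro ⟨u, v⟩ hq
    exact aux_horiz hU hsmooth hq
  have D2v : ∀ q ∈ U, HasDerivAt (fun w => g (q.1, w)) (g2 q) q.2 := by
    rintro ⟨u, v⟩ hq
    exact aux_vert hU hg hq
  have D2u : ∀ q ∈ U, HasDerivAt (fun w => h (w, q.2)) (h2 q) q.1 := by
    rintro ⟨u, v⟩ hq
    exact aux_horiz hU hh hq
  -- harmonicity in terms of g2 and h2
  have hharm2 : ∀ q ∈ U, h2 q + g2 q = 0 := by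
    rintro ⟨u, v⟩ hq
    have hFvv : deriv (deriv (fun w => F u w)) v = g2 (u, v) := by
      have hev : (fun w => g (u, w)) =ᶠ[nhds v] deriv (fun w => F u w) := by
        have hop : {w : ℝ | (u, w) ∈ U} ∈ nhds v :=
          (hU.preimage (continuous_const.prodMk continuous_id)).mem_nhds hq
        filter_upwards [hop] with w hw
        exact (D1v (u, w) hw).deriv.symm
      exact ((D2v (u, v) hq).congr_of_eventuallyEq hev.symm).deriv
    have hFuu : deriv (deriv (fun w => F w v)) u = h2 (u, v) := by
      have hev : (fun w => h (w, v)) =ᶠ[nhds u] deriv (fun w => F w v) := by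
        have hop : {w : ℝ | (w, v) ∈ U} ∈ nhds u :=
          (hU.preimage (continuous_id.prodMk continuous_const)).mem_nhds hq
        filter_upwards [hop] with w hw
        exact (D1u (w, v) hw).deriv.symm
      exact ((D2u (u, v) hq).congr_of_eventuallyEq hev.symm).deriv
    have := hharm (u, v) hq
    simpa [hFuu, hFvv] using this
  -- key: differentiation under the integral sign
  have hIoc : Set.uIoc (0:ℝ) T ⊆ Set.Icc 0 T := by
    rw [Set.uIoc_of_le hTpos.le]
    exact Set.Ioc_subset_Icc_self
  have hIcc : Set.uIcc (0:ℝ) T = Set.Icc 0 T := Set.uIcc_of_le hTpos.le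
  have key : ∀ (φ ψ : ℝ × ℝ → ℝ), ContinuousOn φ U → ContinuousOn ψ U →
      (∀ q ∈ U, HasDerivAt (fun w => φ (q.1, w)) (ψ q) q.2) →
      ∀ v₀ : ℝ, 0 ≤ v₀ →
      HasDerivAt (fun v => ∫ u in (0:ℝ)..T, φ (u, v)) (∫ u in (0:ℝ)..T, ψ (u, v₀)) v₀ := by
    intro φ ψ hφ hψ hd v₀ hv₀
    have hKcompact : IsCompact (Set.Icc (0:ℝ) T ×ˢ Set.Icc v₀ v₀) :=
      isCompact_Icc.prod isCompact_Icc
    have hKU : Set.Icc (0:ℝ) T ×ˢ Set.Icc v₀ v₀ ⊆ U := by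
      rintro ⟨t, x⟩ ⟨-, hx⟩
      have : 0 ≤ x := le_trans hv₀ hx.1
      exact hUH this
    obtain ⟨δ, hδpos, hδ⟩ := hKcompact.exists_thickening_subset_open hU hKU
    set ε : ℝ := δ / 2 with hεdef
    have hεpos : 0 < ε := half_pos hδpos
    have hball : ∀ t ∈ Set.Icc (0:ℝ) T, ∀ x : ℝ, dist x v₀ ≤ ε → (t, x) ∈ U := by
      intro t ht x hx
      apply hδ
      rw [Metric.mem_thickening_iff]
      refine ⟨(t, v₀), ⟨ht, Set.mem_Icc.2 ⟨le_rfl, le_rfl⟩⟩, ?_⟩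
      rw [Prod.dist_eq]
      simp only [dist_self]
      calc max 0 (dist x v₀) = dist x v₀ := max_eq_right dist_nonneg
        _ ≤ ε := hx
        _ < δ := by rw [hεdef]; linarith
    have hK2compact : IsCompact (Set.Icc (0:ℝ) T ×ˢ Set.Icc (v₀ - ε) (v₀ + ε)) :=
      isCompact_Icc.prod isCompact_Icc
    have hK2U : Set.Icc (0:ℝ) T ×ˢ Set.Icc (v₀ - ε) (v₀ + ε) ⊆ U := by
      rintro ⟨t, x⟩ ⟨ht, hx⟩
      apply hball t ht
      rw [Real.dist_eq, abs_le]
      constructor <;> [linarith [hx.1]; linarith [hx.2]]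
    obtain ⟨C, hC⟩ := hK2compact.exists_bound_of_continuousOn (hψ.mono hK2U)
    have hcont : ∀ x : ℝ, dist x v₀ ≤ ε → ContinuousOn (fun t => φ (t, x)) (Set.Icc 0 T) := by
      intro x hx
      apply hφ.comp (continuous_id.prodMk continuous_const).continuousOn
      intro t ht
      exact hball t ht x hx
    have main := intervalIntegral.hasDerivAt_integral_of_dominated_loc_of_deriv_le
      (F := fun x t => φ (t, x)) (F' := fun x t => ψ (t, x)) (x₀ := v₀)
      (a := (0:ℝ)) (b := T) (bound := fun _ => C) (μ := volume) (Metric.ball_mem_nhds v₀ hεpos)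
      ?_ ?_ ?_ ?_ ?_ ?_
    · exact main.2
    · -- measurability eventually
      filter_upwards [Metric.ball_mem_nhds v₀ hεpos] with x hx
      exact (((hcont x (le_of_lt hx)).mono hIoc).aestronglyMeasurable measurableSet_uIoc)
    · -- integrability at v₀
      apply ContinuousOn.intervalIntegrable
      rw [hIcc]
      exact hcont v₀ (by simp [hεpos.le])
    · -- measurability of derivative at v₀
      have : ContinuousOn (fun t => ψ (t, v₀)) (Set.Icc 0 T) := by
        apply hψ.comp (continuous_id.prodMk continuous_const).continuousOn
        intro t ht
        exact hball t ht v₀ (by simp [hεpos.le])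
      exact ((this.mono hIoc).aestronglyMeasurable measurableSet_uIoc)
    · -- bound
      apply Filter.Eventually.of_forall
      intro t ht x hx
      apply hC
      refine ⟨hIoc ht, ?_⟩
      have := le_of_lt (Metric.mem_ball.mp hx)
      rw [Real.dist_eq, abs_le] at this
      exact Set.mem_Icc.2 ⟨by linarith [this.1], by linarith [this.2]⟩
    · exact intervalIntegrable_const
    · -- differentiability
      apply Filter.Eventually.of_forall
      intro t ht x hx
      exact hd (t, x) (hball t (hIoc ht) x (le_of_lt (Metric.mem_ball.mp hx)))
  -- Fu is periodic, so ∫ h2 = 0, hence ∫ g2 = 0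
  have claim3 : ∀ v₀ : ℝ, 0 ≤ v₀ → (∫ u in (0:ℝ)..T, g2 (u, v₀)) = 0 := by
    intro v₀ hv₀
    have hmem : ∀ u : ℝ, ((u, v₀) : ℝ × ℝ) ∈ U := fun u => hUH hv₀
    have hper' : h (T, v₀) = h (0, v₀) := by
      have e1 : h (T, v₀) = deriv (fun w => F w v₀) T := ((D1u (T, v₀) (hmem T)).deriv).symm
      have e2 : h (0, v₀) = deriv (fun w => F w v₀) 0 := ((D1u (0, v₀) (hmem 0)).deriv).symm
      rw [e1, e2]
      have : (fun w => F w v₀) = fun w => F (w + T) v₀ := funext fun w => (hper w v₀).symm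
      have e3 : deriv (fun w => F w v₀) 0 = deriv (fun w => F (w + T) v₀) 0 := by rw [← this]
      have e4 : deriv (fun w => F (w + T) v₀) 0 = deriv (fun w => F w v₀) (0 + T) :=
        deriv_comp_add_const (fun w => F w v₀) T 0
      rw [e3, e4, zero_add]
    have hFTC : (∫ u in (0:ℝ)..T, h2 (u, v₀)) = h (T, v₀) - h (0, v₀) := by
      apply intervalIntegral.integral_eq_sub_of_hasDerivAt
        (f := fun u => h (u, v₀)) (f' := fun u => h2 (u, v₀))
      · intro t ht
        exact D2u (t, v₀) (hmem t)
      · apply ContinuousOn.intervalIntegrable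
        apply (hh2.continuousOn.comp (continuous_id.prodMk continuous_const).continuousOn)
        intro t ht
        exact hmem t
    have hcongr : (∫ u in (0:ℝ)..T, g2 (u, v₀)) = ∫ u in (0:ℝ)..T, -h2 (u, v₀) := by
      apply intervalIntegral.integral_congr
      intro t ht
      have := hharm2 (t, v₀) (hmem t)
      simp only
      linarith
    rw [hcongr, intervalIntegral.integral_neg, hFTC, hper', sub_self, neg_zero]
  -- assemble
  set A : ℝ → ℝ := fun v => ∫ u in (0:ℝ)..T, F u v with hAdef
  set B : ℝ → ℝ := fun v => ∫ u in (0:ℝ)..T, g (u, v) with hBdef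
  have hA' : ∀ v₀ : ℝ, 0 ≤ v₀ → HasDerivAt A (B v₀) v₀ :=
    key f g hsmooth.continuousOn hg.continuousOn D1v
  have hB' : ∀ v₀ : ℝ, 0 ≤ v₀ → HasDerivAt B 0 v₀ := by
    intro v₀ hv₀
    have := key g g2 hg.continuousOn hg2.continuousOn D2v v₀ hv₀
    rwa [claim3 v₀ hv₀] at this
  have hBconst : ∀ v : ℝ, 0 ≤ v → B v = B 0 := by
    intro v hv
    have hsub : (∫ t in (0:ℝ)..v, (0:ℝ)) = B v - B 0 := by
      apply intervalIntegral.integral_eq_sub_of_hasDerivAt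
      · intro t ht
        rw [Set.uIcc_of_le hv] at ht
        exact hB' t ht.1
      · exact intervalIntegrable_const
    simp only [intervalIntegral.integral_zero] at hsub
    linarith
  have hAaff : ∀ v : ℝ, 0 ≤ v → A v = A 0 + B 0 * v := by
    intro v hv
    have hsub : (∫ t in (0:ℝ)..v, B 0) = A v - A 0 := by
      apply intervalIntegral.integral_eq_sub_of_hasDerivAt
      · intro t ht
        rw [Set.uIcc_of_le hv] at ht
        have := hA' t ht.1
        rwa [hBconst t ht.1] at this
      · exact intervalIntegrable_const
    rw [intervalIntegral.integral_const, smul_eq_mul, sub_zero] at hsub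
    linarith [hsub]
  have hAnn : ∀ v : ℝ, 0 ≤ v → 0 ≤ A v := by
    intro v hv
    exact intervalIntegral.integral_nonneg hTpos.le (fun u _ => hpos u v hv)
  have hA0 : 0 ≤ A 0 := hAnn 0 le_rfl
  have hB0 : 0 ≤ B 0 := by
    by_contra hc
    push_neg at hc
    set v : ℝ := (A 0 + 1) / (-(B 0)) with hvdef
    have hvpos : 0 ≤ v := by
      apply div_nonneg (by linarith) (by linarith)
    have := hAnn v hvpos
    rw [hAaff v hvpos] at this
    have hBne : -B 0 ≠ 0 := ne_of_gt (by linarith)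
    have hBv : B 0 * v = -(A 0 + 1) := by
      have hdm : v * (-B 0) = A 0 + 1 := div_mul_cancel₀ _ hBne
      calc B 0 * v = -(v * (-B 0)) := by ring
        _ = -(A 0 + 1) := by rw [hdm]
    rw [hBv] at this
    linarith
  refine ⟨A 0 / T, B 0 / T, div_nonneg hA0 hTpos.le, div_nonneg hB0 hTpos.le, ?_⟩
  intro v hv
  have : (1 / T) * A v = A 0 / T + (B 0 / T) * v := by
    rw [hAaff v hv]
    ring
  exact this
end

section
/- For λ ∈ (0,1], v ≥ 1/λ, and all u, y ∈ ℝ: the ratio of ∂/∂v(−(1/(2λ))·(v/(v²+(u−y)²))·e^{−2λv}) to (v/(v²+(u−y)²))·e^{−2λv} lies in the interval (1/2, 2). -/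
open Real Set

/-! With `c = u - y`, the ratio equals `1 - 1/(2λv) + v/(λ(v² + c²))`. Since `λv ≥ 1`, the middle
term lies in `(0, 1/2]` and the last one in `(0, 1/(λv)]`, which confines the ratio to
`(1/2, 3/2]`. -/

theorem hasDerivAt_div_sq_add_sq (c v : ℝ) (hv : v ^ 2 + c ^ 2 ≠ 0) :
    HasDerivAt (fun t : ℝ => t / (t ^ 2 + c ^ 2)) ((c ^ 2 - v ^ 2) / (v ^ 2 + c ^ 2) ^ 2) v := by
  refine ((hasDerivAt_id' v).div ((hasDerivAt_pow 2 v).add_const (c ^ 2)) hv).congr_deriv ?_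
  ring

theorem deriv_div_sq_add_sq_mul_exp_div_eq {lam v : ℝ} (hlam : lam ≠ 0) (hv : v ≠ 0) (c : ℝ) :
    deriv (fun t : ℝ => -(1 / (2 * lam)) * (t / (t ^ 2 + c ^ 2)) * exp (-2 * lam * t)) v
        / ((v / (v ^ 2 + c ^ 2)) * exp (-2 * lam * v))
      = 1 - 1 / (2 * (lam * v)) + v / (lam * (v ^ 2 + c ^ 2)) := by
  have hden : v ^ 2 + c ^ 2 ≠ 0 := by positivity
  have hexp : HasDerivAt (fun t : ℝ => exp (-2 * lam * t)) (exp (-2 * lam * v) * (-2 * lam)) v := by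
    simpa using ((hasDerivAt_id v).const_mul (-2 * lam)).exp
  have hF : HasDerivAt
      (fun t : ℝ => -(1 / (2 * lam)) * (t / (t ^ 2 + c ^ 2)) * exp (-2 * lam * t))
      (-(1 / (2 * lam)) * ((c ^ 2 - v ^ 2) / (v ^ 2 + c ^ 2) ^ 2) * exp (-2 * lam * v)
        + -(1 / (2 * lam)) * (v / (v ^ 2 + c ^ 2)) * (exp (-2 * lam * v) * (-2 * lam))) v :=
    ((hasDerivAt_div_sq_add_sq c v hden).const_mul _).mul hexp
  rw [hF.deriv]
  field_simp
  ring

theorem one_sub_inv_two_mul_add_div_mem_Ioo {lam v : ℝ} (hlam : 0 < lam) (hlv : 1 ≤ lam * v)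
    (c : ℝ) : 1 - 1 / (2 * (lam * v)) + v / (lam * (v ^ 2 + c ^ 2)) ∈ Ioo (1 / 2 : ℝ) 2 := by
  have hv : 0 < v := pos_of_mul_pos_right (by linarith) hlam.le
  have hmid : 1 / (2 * (lam * v)) ≤ 1 / 2 :=
    one_div_le_one_div_of_le two_pos (by linarith)
  have hlast_pos : 0 < v / (lam * (v ^ 2 + c ^ 2)) := by positivity
  have hlast_le : v / (lam * (v ^ 2 + c ^ 2)) ≤ 1 / (lam * v) := by
    rw [div_le_div_iff₀ (by positivity) (by positivity)]
    nlinarith [sq_nonneg c]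
  have hinv_eq : 1 / (lam * v) = 2 * (1 / (2 * (lam * v))) := by field_simp
  constructor <;> linarith

theorem log_deriv_ratio_exp_lambda_general
    (lam : ℝ) (hlam0 : 0 < lam)
    (v : ℝ) (hv : 1 / lam ≤ v) (u y : ℝ) :
    deriv (fun t : ℝ =>
        -(1 / (2 * lam)) * (t / (t ^ 2 + (u - y) ^ 2)) * Real.exp (-2 * lam * t)) v
      / ((v / (v ^ 2 + (u - y) ^ 2)) * Real.exp (-2 * lam * v)) ∈ Set.Ioo (1 / 2 : ℝ) 2 := by
  have hlv : 1 ≤ lam * v := by rwa [div_le_iff₀' hlam0] at hv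
  have hv0 : v ≠ 0 := right_ne_zero_of_mul (by positivity : lam * v ≠ 0)
  rw [deriv_div_sq_add_sq_mul_exp_div_eq hlam0.ne' hv0]
  exact one_sub_inv_two_mul_add_div_mem_Ioo hlam0 hlv (u - y)

/-- For `v ≥ 1/λ` with `λ ∈ (0,1]`, the logarithmic derivative ratio
`(d/dv)(-(1/(2λ))·(v/(v²+(u−y)²))·e^{−2λv}) / ((v/(v²+(u−y)²))·e^{−2λv})`
lies in `(1/2, 2)`. -/
theorem log_deriv_ratio_exp_lambda
    (lam : ℝ) (hlam0 : 0 < lam) (hlam1 : lam ≤ 1)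
    (v : ℝ) (hv : 1 / lam ≤ v) (u y : ℝ) :
    deriv (fun t : ℝ =>
        -(1 / (2 * lam)) * (t / (t ^ 2 + (u - y) ^ 2)) * Real.exp (-2 * lam * t)) v
      / ((v / (v ^ 2 + (u - y) ^ 2)) * Real.exp (-2 * lam * v)) ∈ Set.Ioo (1 / 2 : ℝ) 2 :=
  log_deriv_ratio_exp_lambda_general lam hlam0 v hv u y
end

section
/- For λ ∈ [−1,0), r ∈ (0,1), and α ∈ ℂ with 0 < |α| < r^{1−λ}: 0 < I_a(r) < I_a(1), where I_a(r) = 1 + λ|α|²r^{2λ−2} + (1/(2log|α|))(−2|α|^{−2/λ}r^{2/λ−2}log r + λ|α|^{−2/λ}r^{2/λ−2} + 2λ²|α|²r^{2λ−2}log r − λ|α|²r^{2λ−2}). -/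
/-!
Put `t = log r` and `L = log |α|`. Then `2L · I_a(r)` is an explicit exponential polynomial
`N(t)`, which vanishes at `t = L / (1 - λ)` (where `r^{1-λ} = |α|`) and is strictly decreasing
on `[L / (1 - λ), 0]`: its derivative is `c₁ e^{u} + c₂ e^{v}` with `c₁ < 0`, `c₁ + c₂ < 0` and
`v ≤ u`, the last because `λ ≥ -1`. As `L < 0`, `N(0) < N(log r) < 0` gives `0 < I_a(r) < I_a(1)`.
-/

open Real

noncomputable def Ia (lam A s : ℝ) : ℝ :=
  1 + lam * A ^ 2 * s ^ (2 * lam - 2)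
    + (1 / (2 * Real.log A)) *
        (-2 * A ^ (-(2 : ℝ) / lam) * s ^ (2 / lam - 2) * Real.log s
          + lam * A ^ (-(2 : ℝ) / lam) * s ^ (2 / lam - 2)
          + 2 * lam ^ 2 * A ^ 2 * s ^ (2 * lam - 2) * Real.log s
          - lam * A ^ 2 * s ^ (2 * lam - 2))

/-- `2 (log A) · Ia lam A r` as a function of `t = log r`, where `L = log A`. -/
noncomputable def IaNum (lam L t : ℝ) : ℝ :=
  2 * L + (2 * lam * L + 2 * lam ^ 2 * t - lam) * exp (2 * L + (2 * lam - 2) * t)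
    + (lam - 2 * t) * exp (-(2 / lam) * L + (2 / lam - 2) * t)

theorem Ia_eq_IaNum_div {lam A r : ℝ} (hA : 0 < A) (hA1 : log A ≠ 0) (hr : 0 < r) :
    Ia lam A r = IaNum lam (log A) (log r) / (2 * log A) := by
  have hX : A ^ 2 * r ^ (2 * lam - 2) = exp (2 * log A + (2 * lam - 2) * log r) := by
    rw [← Real.rpow_natCast, rpow_def_of_pos hA, rpow_def_of_pos hr, ← exp_add]
    ring_nf
  have hY : A ^ (-(2 : ℝ) / lam) * r ^ (2 / lam - 2)
      = exp (-(2 / lam) * log A + (2 / lam - 2) * log r) := by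
    rw [rpow_def_of_pos hA, rpow_def_of_pos hr, ← exp_add]
    ring_nf
  rw [Ia, IaNum, ← hX, ← hY]
  field_simp
  ring

theorem IaNum_boundary {lam : ℝ} (hlam : lam ≠ 0) (hlam_one : lam ≠ 1) (L : ℝ) :
    IaNum lam L (L / (1 - lam)) = 0 := by
  have h1 : 1 - lam ≠ 0 := sub_ne_zero.mpr (Ne.symm hlam_one)
  have e1 : 2 * L + (2 * lam - 2) * (L / (1 - lam)) = 0 := by field_simp; ring
  have e2 : -(2 / lam) * L + (2 / lam - 2) * (L / (1 - lam)) = 0 := by field_simp; ring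
  rw [IaNum, e1, e2, exp_zero]
  field_simp
  ring

theorem hasDerivAt_IaNum {lam : ℝ} (hlam : lam ≠ 0) (L t : ℝ) :
    HasDerivAt (IaNum lam L)
      (2 * lam * (1 - 2 * (1 - lam) * (lam * t + L)) * exp (2 * L + (2 * lam - 2) * t)
        - 2 * (lam + 2 * (1 - lam) * t / lam) * exp (-(2 / lam) * L + (2 / lam - 2) * t)) t := by
  have h1 := ((hasDerivAt_id t).const_mul (2 * lam - 2)).const_add (2 * L) |>.exp
  have h2 := ((hasDerivAt_id t).const_mul (2 / lam - 2)).const_add (-(2 / lam) * L) |>.exp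
  have h3 := (((hasDerivAt_id t).const_mul (2 * lam ^ 2)).const_add (2 * lam * L)).sub_const lam
  have h4 := ((hasDerivAt_id t).const_mul 2).const_sub lam
  refine (((h3.fun_mul h1).const_add (2 * L)).fun_add (h4.fun_mul h2)).congr_deriv ?_
  simp only [id]
  field_simp
  ring

theorem mul_add_mul_neg_of_le {a b x y : ℝ} (ha : a < 0) (hab : a + b < 0) (hy : 0 < y)
    (hyx : y ≤ x) : a * x + b * y < 0 := by
  rcases le_or_gt b 0 with hb | hb
  · nlinarith
  · nlinarith

theorem IaNum_deriv_neg {lam L t : ℝ} (hlam0 : -1 ≤ lam) (hlam1 : lam < 0) (ht : t < 0)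
    (hL : L < (1 - lam) * t) :
    2 * lam * (1 - 2 * (1 - lam) * (lam * t + L)) * exp (2 * L + (2 * lam - 2) * t)
      - 2 * (lam + 2 * (1 - lam) * t / lam) * exp (-(2 / lam) * L + (2 / lam - 2) * t) < 0 := by
  have hlt : lam * t + L < 0 := by linarith
  have hc1 : 2 * lam * (1 - 2 * (1 - lam) * (lam * t + L)) < 0 :=
    mul_neg_of_neg_of_pos (by linarith) (by nlinarith)
  have hc12 : 2 * lam * (1 - 2 * (1 - lam) * (lam * t + L))
      + -(2 * (lam + 2 * (1 - lam) * t / lam)) < 0 := by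
    have h1 : 0 < lam * (lam * t + L) := mul_pos_of_neg_of_neg hlam1 hlt
    have h2 : 0 < t / lam := div_pos_of_neg_of_neg ht hlam1
    have h3 : 2 * lam * (1 - 2 * (1 - lam) * (lam * t + L))
        + -(2 * (lam + 2 * (1 - lam) * t / lam))
        = -(4 * (1 - lam) * (lam * (lam * t + L) + t / lam)) := by ring
    rw [h3, neg_lt_zero]
    have : 0 < 1 - lam := by linarith
    positivity
  -- The exponents differ by `2 (1 + λ) ((1 - λ) t - L) / λ ≤ 0`.
  have hexp : exp (-(2 / lam) * L + (2 / lam - 2) * t) ≤ exp (2 * L + (2 * lam - 2) * t) := by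
    rw [exp_le_exp, ← sub_nonpos]
    have h : -(2 / lam) * L + (2 / lam - 2) * t - (2 * L + (2 * lam - 2) * t)
        = 2 * (1 + lam) * ((1 - lam) * t - L) / lam := by
      field_simp [hlam1.ne]
      ring
    rw [h]
    exact div_nonpos_of_nonneg_of_nonpos (by nlinarith) hlam1.le
  rw [sub_eq_add_neg, ← neg_mul]
  exact mul_add_mul_neg_of_le hc1 hc12 (exp_pos _) hexp

theorem strictAntiOn_IaNum {lam : ℝ} (hlam0 : -1 ≤ lam) (hlam1 : lam < 0) (L : ℝ) :
    StrictAntiOn (IaNum lam L) (Set.Icc (L / (1 - lam)) 0) := by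
  refine strictAntiOn_of_deriv_neg (convex_Icc _ _)
    (fun t _ => (hasDerivAt_IaNum hlam1.ne L t).continuousAt.continuousWithinAt) fun t ht => ?_
  rw [interior_Icc] at ht
  rw [(hasDerivAt_IaNum hlam1.ne L t).deriv]
  have hL : L < (1 - lam) * t := by
    have := ht.1
    rwa [div_lt_iff₀ (by linarith), mul_comm] at this
  exact IaNum_deriv_neg hlam0 hlam1 ht.2 hL

/-- For `λ ∈ [−1,0)`, `r ∈ (0,1)`, `0 < |α| < r^{1−λ}`: `0 < I_a(r) < I_a(1)`. -/
theorem Ia_lt_Ia_one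
    (lam : ℝ) (hlam0 : -1 ≤ lam) (hlam1 : lam < 0)
    (r : ℝ) (hr0 : 0 < r) (hr1 : r < 1)
    (α : ℂ) (hα0 : 0 < ‖α‖) (hα : ‖α‖ < r ^ ((1 : ℝ) - lam)) :
    let A : ℝ := ‖α‖
    let Ia : ℝ → ℝ := fun s =>
      1 + lam * A ^ 2 * s ^ (2 * lam - 2)
        + (1 / (2 * Real.log A)) *
            (-2 * A ^ (-(2 : ℝ) / lam) * s ^ (2 / lam - 2) * Real.log s
              + lam * A ^ (-(2 : ℝ) / lam) * s ^ (2 / lam - 2)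
              + 2 * lam ^ 2 * A ^ 2 * s ^ (2 * lam - 2) * Real.log s
              - lam * A ^ 2 * s ^ (2 * lam - 2))
    0 < Ia r ∧ Ia r < Ia 1 := by
  show 0 < Ia lam ‖α‖ r ∧ Ia lam ‖α‖ r < Ia lam ‖α‖ 1
  have ht : log r < 0 := log_neg hr0 hr1
  have hL : log ‖α‖ < (1 - lam) * log r := by
    rw [← log_rpow hr0]
    exact log_lt_log hα0 hα
  have hL0 : 2 * log ‖α‖ < 0 := by nlinarith
  have hboundary : log ‖α‖ / (1 - lam) < log r := by
    rwa [div_lt_iff₀ (by linarith), mul_comm]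
  have hanti := strictAntiOn_IaNum hlam0 hlam1 (log ‖α‖)
  have hneg : IaNum lam (log ‖α‖) (log r) < 0 := by
    rw [← IaNum_boundary hlam1.ne (by linarith) (log ‖α‖)]
    exact hanti ⟨le_rfl, by linarith⟩ ⟨hboundary.le, ht.le⟩ hboundary
  have hgt : IaNum lam (log ‖α‖) 0 < IaNum lam (log ‖α‖) (log r) :=
    hanti ⟨hboundary.le, ht.le⟩ ⟨by linarith, le_rfl⟩ ht
  rw [Ia_eq_IaNum_div hα0 (by linarith) hr0, Ia_eq_IaNum_div hα0 (by linarith) one_pos, log_one]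
  exact ⟨div_pos_of_neg_of_neg hneg hL0, (div_lt_div_right_of_neg hL0).mpr hgt⟩
end

section
/- For λ ∈ [−1,0), r ∈ (0, e^{1/(2λ(1−λ))}), and α with 0 < |α| < r^{1−λ}: 0 < I_b(r) < I_b(e^{1/(2λ(1−λ))}) ≤ e^{−1/(λ(1−λ))} · I_b(1), where I_b(r) = (1/2)(−|α|^{−2/λ}r^{2/λ−2}(λ+2log|α|−2log r)/λ + |α|²r^{2λ−2}(1−2λ log r) − 2log|α|). -/
/-!
In the variable `t = log s`, `I_b` becomes an explicit sum of exponentials `F(t)` which vanishes at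
`t₀ = log |α| / (1 - λ)` and has positive derivative on `[t₀, T]`, `T = 1 / (2λ(1 - λ))`. The
hypotheses on `r` and `α` say exactly `t₀ < log r < T`, which gives the first two inequalities.
For the third, `(2F + F')(t) > 0` on `(log |α|, 0]`, so `e^{2t} F(t)` increases from `T` to `0`,
i.e. `e^{2T} F(T) < F(0)`.
-/

open Real Set

theorem strictMonoOn_Icc_of_hasDerivAt_pos {f f' : ℝ → ℝ} {a b : ℝ}
    (hf : ∀ x, HasDerivAt f (f' x) x) (hf' : ∀ x ∈ Ioo a b, 0 < f' x) :
    StrictMonoOn f (Icc a b) :=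
  strictMonoOn_of_deriv_pos (convex_Icc a b)
    (fun x _ => (hf x).continuousAt.continuousWithinAt)
    (fun x hx => by rw [interior_Icc] at hx; rw [(hf x).deriv]; exact hf' x hx)

/-- `I_b(e^t)`, with `a = log |α|`. -/
noncomputable def ibOfLog (lam a t : ℝ) : ℝ :=
  (1 / 2) *
    (-(exp (a * (-2 / lam)) * exp (t * (2 / lam - 2)) * (lam + 2 * a - 2 * t)) / lam
      + exp (2 * a) * exp (t * (2 * lam - 2)) * (1 - 2 * lam * t)
      - 2 * a)

noncomputable def ibOfLogDeriv (lam a t : ℝ) : ℝ :=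
  exp (a * (-2 / lam)) * exp (t * (2 / lam - 2)) * (1 + 2 * (1 - lam) * (t - a) / lam ^ 2)
    + exp (2 * a) * exp (t * (2 * lam - 2)) * (2 * lam * (1 - lam) * t - 1)

section

variable {lam a : ℝ}

theorem ib_eq_ibOfLog {A s : ℝ} (hA : 0 < A) (hs : 0 < s) :
    (1 / 2) *
        (-(A ^ (-(2 : ℝ) / lam) * s ^ (2 / lam - 2) *
            (lam + 2 * Real.log A - 2 * Real.log s)) / lam
          + A ^ 2 * s ^ (2 * lam - 2) * (1 - 2 * lam * Real.log s)
          - 2 * Real.log A) = ibOfLog lam (log A) (log s) := by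
  rw [rpow_def_of_pos hA, rpow_def_of_pos hs, rpow_def_of_pos hs, ← exp_log hA, ← exp_nat_mul,
    log_exp]
  simp only [ibOfLog, neg_div]
  push_cast
  ring

theorem hasDerivAt_ibOfLog (hlam : lam ≠ 0) (t : ℝ) :
    HasDerivAt (ibOfLog lam a) (ibOfLogDeriv lam a t) t := by
  have h₁ : HasDerivAt (fun u => exp (u * (2 / lam - 2)))
      (exp (t * (2 / lam - 2)) * (2 / lam - 2)) t := (hasDerivAt_mul_const _).exp
  have h₂ : HasDerivAt (fun u => exp (u * (2 * lam - 2)))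
      (exp (t * (2 * lam - 2)) * (2 * lam - 2)) t := (hasDerivAt_mul_const _).exp
  have l₁ := ((hasDerivAt_id' t).const_mul 2).const_sub (lam + 2 * a)
  have l₂ := ((hasDerivAt_id' t).const_mul (2 * lam)).const_sub 1
  refine ((((h₁.const_mul (exp (a * (-2 / lam)))).mul l₁).neg.div_const lam).add
    ((h₂.const_mul (exp (2 * a))).mul l₂) |>.sub_const (2 * a)).const_mul (1 / 2)
    |>.congr_deriv ?_
  unfold ibOfLogDeriv
  field_simp
  ring

theorem ibOfLog_eq_zero (hlam : lam ≠ 0) (hlam' : lam ≠ 1) :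
    ibOfLog lam a (a / (1 - lam)) = 0 := by
  have h1 : 1 - lam ≠ 0 := sub_ne_zero.mpr (Ne.symm hlam')
  have e₁ : exp (a * (-2 / lam)) * exp (a / (1 - lam) * (2 / lam - 2)) = 1 := by
    rw [← exp_add, exp_eq_one_iff]; field_simp; ring
  have e₂ : exp (2 * a) * exp (a / (1 - lam) * (2 * lam - 2)) = 1 := by
    rw [← exp_add, exp_eq_one_iff]; field_simp; ring
  unfold ibOfLog
  rw [e₁, e₂]
  field_simp
  ring

theorem ibOfLogDeriv_pos (hlam : lam < 0) {t : ℝ} (hat : a ≤ t)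
    (htT : t ≤ 1 / (2 * lam * (1 - lam))) : 0 < ibOfLogDeriv lam a t := by
  have hd : 2 * lam * (1 - lam) < 0 := by nlinarith
  have h₁ : 0 ≤ 2 * (1 - lam) * (t - a) / lam ^ 2 := by
    have : 0 ≤ 2 * (1 - lam) * (t - a) := by nlinarith
    positivity
  have h₂ : 0 ≤ 2 * lam * (1 - lam) * t - 1 := by
    rw [le_div_iff_of_neg hd] at htT
    linarith
  unfold ibOfLogDeriv
  have := mul_pos (mul_pos (exp_pos (a * (-2 / lam))) (exp_pos (t * (2 / lam - 2))))
    (show 0 < 1 + 2 * (1 - lam) * (t - a) / lam ^ 2 by linarith)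
  have := mul_nonneg (mul_pos (exp_pos (2 * a)) (exp_pos (t * (2 * lam - 2)))).le h₂
  linarith

theorem strictMonoOn_ibOfLog (hlam : lam < 0) :
    StrictMonoOn (ibOfLog lam a) (Icc (a / (1 - lam)) (1 / (2 * lam * (1 - lam)))) := by
  refine strictMonoOn_Icc_of_hasDerivAt_pos (hasDerivAt_ibOfLog hlam.ne) fun t ht => ?_
  have hT : 1 / (2 * lam * (1 - lam)) < 0 := one_div_neg.mpr (by nlinarith)
  have hat : a < (1 - lam) * t := by
    have := ht.1
    rwa [div_lt_iff₀ (by linarith), mul_comm] at this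
  exact ibOfLogDeriv_pos hlam (by nlinarith [ht.2]) ht.2.le

theorem two_mul_ibOfLog_add_ibOfLogDeriv_pos (hlam : lam ≠ 0) {t : ℝ} (hat : a < t)
    (ht : t ≤ 0) :
    0 < 2 * ibOfLog lam a t + ibOfLogDeriv lam a t := by
  have key : 2 * ibOfLog lam a t + ibOfLogDeriv lam a t =
      exp (a * (-2 / lam)) * exp (t * (2 / lam - 2)) * (2 * (t - a) / lam ^ 2)
        + exp (2 * a) * exp (t * (2 * lam - 2)) * (-2 * lam ^ 2 * t) - 2 * a := by
    unfold ibOfLog ibOfLogDeriv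
    field_simp
    ring
  have h₁ : 0 < 2 * (t - a) / lam ^ 2 := div_pos (by linarith) (by positivity)
  have h₂ : 0 ≤ -2 * lam ^ 2 * t := by nlinarith [sq_nonneg lam]
  have := mul_pos (mul_pos (exp_pos (a * (-2 / lam))) (exp_pos (t * (2 / lam - 2)))) h₁
  have := mul_nonneg (mul_pos (exp_pos (2 * a)) (exp_pos (t * (2 * lam - 2)))).le h₂
  linarith

theorem strictMonoOn_exp_two_mul_ibOfLog (hlam : lam ≠ 0) :
    StrictMonoOn (fun t => exp (2 * t) * ibOfLog lam a t) (Icc a 0) := by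
  have hd (t : ℝ) := ((hasDerivAt_id' t).const_mul 2).exp.mul (hasDerivAt_ibOfLog (a := a) hlam t)
  refine strictMonoOn_Icc_of_hasDerivAt_pos hd fun t ht => ?_
  have := two_mul_ibOfLog_add_ibOfLogDeriv_pos hlam ht.1 ht.2.le
  have := exp_pos (2 * t)
  nlinarith

end

theorem Ib_bounds_general
    (lam : ℝ) (hlam1 : lam < 0)
    (r : ℝ) (hr0 : 0 < r) (hr1 : r < Real.exp (1 / (2 * lam * (1 - lam))))
    (α : ℂ) (hα0 : 0 < ‖α‖) (hα : ‖α‖ < r ^ ((1 : ℝ) - lam)) :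
    let A : ℝ := ‖α‖
    let Ib : ℝ → ℝ := fun s =>
      (1 / 2) *
        (-(A ^ (-(2 : ℝ) / lam) * s ^ (2 / lam - 2) *
            (lam + 2 * Real.log A - 2 * Real.log s)) / lam
          + A ^ 2 * s ^ (2 * lam - 2) * (1 - 2 * lam * Real.log s)
          - 2 * Real.log A)
    0 < Ib r ∧ Ib r < Ib (Real.exp (1 / (2 * lam * (1 - lam)))) ∧
      Ib (Real.exp (1 / (2 * lam * (1 - lam)))) ≤ Real.exp (-1 / (lam * (1 - lam))) * Ib 1 := by
  intro A Ib
  have hIb (s : ℝ) (hs : 0 < s) : Ib s = ibOfLog lam (log A) (log s) := ib_eq_ibOfLog hα0 hs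
  rw [hIb r hr0, hIb _ (exp_pos _), hIb 1 one_pos, log_exp, log_one]
  set a := log A
  set T := 1 / (2 * lam * (1 - lam)) with hT_def
  have hT : T < 0 := one_div_neg.mpr (by nlinarith)
  have hrT : log r < T := (log_lt_iff_lt_exp hr0).mpr hr1
  have har : a < (1 - lam) * log r := by simpa [log_rpow hr0] using log_lt_log hα0 hα
  have ht₀r : a / (1 - lam) < log r := by rw [div_lt_iff₀ (by linarith)]; linarith
  have haT : a ≤ T := by nlinarith
  have hmono := strictMonoOn_ibOfLog (a := a) hlam1
  refine ⟨?_, ?_, ?_⟩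
  · rw [← ibOfLog_eq_zero hlam1.ne (by linarith)]
    exact hmono ⟨le_rfl, by linarith⟩ ⟨ht₀r.le, hrT.le⟩ ht₀r
  · exact hmono ⟨ht₀r.le, hrT.le⟩ ⟨by linarith, le_rfl⟩ hrT
  · have h := strictMonoOn_exp_two_mul_ibOfLog (a := a) hlam1.ne ⟨haT, hT.le⟩
      ⟨haT.trans hT.le, le_rfl⟩ hT
    have hexp : -1 / (lam * (1 - lam)) = -(2 * T) := by rw [hT_def]; field_simp
    rw [hexp, exp_neg, le_inv_mul_iff₀ (exp_pos _)]
    simpa using h.le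

/-- For `λ ∈ [−1,0)`, `r ∈ (0, e^{1/(2λ(1−λ))})`, `0 < |α| < r^{1−λ}`:
`0 < I_b(r) < I_b(e^{1/(2λ(1−λ))}) ≤ e^{−1/(λ(1−λ))}·I_b(1)`. -/
theorem Ib_bounds
    (lam : ℝ) (hlam0 : -1 ≤ lam) (hlam1 : lam < 0)
    (r : ℝ) (hr0 : 0 < r) (hr1 : r < Real.exp (1 / (2 * lam * (1 - lam))))
    (α : ℂ) (hα0 : 0 < ‖α‖) (hα : ‖α‖ < r ^ ((1 : ℝ) - lam)) :
    let A : ℝ := ‖α‖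
    let Ib : ℝ → ℝ := fun s =>
      (1 / 2) *
        (-(A ^ (-(2 : ℝ) / lam) * s ^ (2 / lam - 2) *
            (lam + 2 * Real.log A - 2 * Real.log s)) / lam
          + A ^ 2 * s ^ (2 * lam - 2) * (1 - 2 * lam * Real.log s)
          - 2 * Real.log A)
    0 < Ib r ∧ Ib r < Ib (Real.exp (1 / (2 * lam * (1 - lam)))) ∧
      Ib (Real.exp (1 / (2 * lam * (1 - lam)))) ≤ Real.exp (-1 / (lam * (1 - lam))) * Ib 1 :=
  Ib_bounds_general lam hlam1 r hr0 hr1 α hα0 hα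
end

section
/- For λ ∈ [−1,0), r ∈ (0, e^{1/(2λ(1−λ))}), 0 < |α| < r^{1−λ}, and t := |α|/r^{1−λ} ∈ (0,1): the expression −λ²(t^{2+2/λ}−1) + 2λ(1−λ)(λ²t^{2+2/λ}+1)log r − 2(1−λ)log t, which up to the positive factor |α|^{−2/λ}r^{2/λ}/(λ²r³) equals dI_b/dr, is strictly positive; hence I_b is strictly increasing in r on (0, e^{1/(2λ(1−λ))}) for such α. -/
/-!
Write `A = |α|`, `t = A / r^(1-λ)` and `c = 2λ(1-λ) < 0`. Below `e^{1/c}` we have `c log r > 1`,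
so the middle term of the numerator exceeds `λ² t^{2+2/λ} + 1`; it therefore dominates
`-λ²(t^{2+2/λ} - 1)`, while `-2(1-λ) log t > 0` because `t < 1`. Differentiating `I_b` and
factoring out `A^{-2/λ} r^{2/λ-3} / λ²` (the identity `A² r^{2λ-3} = A^{-2/λ} r^{2/λ-3} t^{2+2/λ}`
does this) leaves exactly that numerator, so `I_b` is strictly increasing.
-/

open Real Set

noncomputable def Ib (lam A s : ℝ) : ℝ :=
  (1 / 2) *
    (-(A ^ (-(2 : ℝ) / lam) * s ^ (2 / lam - 2) * (lam + 2 * log A - 2 * log s)) / lam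
      + A ^ 2 * s ^ (2 * lam - 2) * (1 - 2 * lam * log s)
      - 2 * log A)

noncomputable def ibDerivNumerator (lam r t : ℝ) : ℝ :=
  -(lam ^ 2) * (t ^ (2 + 2 / lam) - 1)
    + 2 * lam * (1 - lam) * (lam ^ 2 * t ^ (2 + 2 / lam) + 1) * log r
    - 2 * (1 - lam) * log t

lemma one_lt_mul_log_of_lt_exp_inv {c r : ℝ} (hc : c < 0) (hr : 0 < r) (hre : r < exp (1 / c)) :
    1 < c * log r := by
  have hlog : log r < 1 / c := (log_lt_iff_lt_exp hr).mpr hre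
  have h := mul_lt_mul_of_neg_left hlog hc
  rwa [mul_one_div_cancel hc.ne] at h

lemma ibDerivNumerator_pos {lam r t : ℝ} (hlam : lam < 0) (ht0 : 0 < t) (ht1 : t < 1)
    (hr : 1 < 2 * lam * (1 - lam) * log r) : 0 < ibDerivNumerator lam r t := by
  have hT : 0 < lam ^ 2 * t ^ (2 + 2 / lam) + 1 := by positivity
  have hlogt : log t < 0 := log_neg ht0 ht1
  unfold ibDerivNumerator
  linarith [mul_lt_mul_of_pos_left hr hT, sq_nonneg lam,
    mul_pos (by linarith : (0 : ℝ) < 2 * (1 - lam)) (neg_pos.mpr hlogt)]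

lemma ibDerivNumerator_pos_of_lt_exp {lam A r : ℝ} (hlam : lam < 0) (hA : 0 < A) (hr : 0 < r)
    (hre : r < exp (1 / (2 * lam * (1 - lam)))) (hAr : A < r ^ (1 - lam)) :
    0 < ibDerivNumerator lam r (A / r ^ (1 - lam)) := by
  have hpow : 0 < r ^ (1 - lam) := rpow_pos_of_pos hr _
  have hc : 2 * lam * (1 - lam) < 0 := by nlinarith
  exact ibDerivNumerator_pos hlam (div_pos hA hpow) ((div_lt_one hpow).mpr hAr)
    (one_lt_mul_log_of_lt_exp_inv hc hr hre)

lemma hasDerivAt_Ib (lam A : ℝ) {s : ℝ} (hlam : lam ≠ 0) (hs : 0 < s) :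
    HasDerivAt (Ib lam A)
      (A ^ (-(2 : ℝ) / lam) * s ^ (2 / lam - 3) *
          ((lam ^ 2 - 2 * (1 - lam) * log A + 2 * (1 - lam) * log s) / lam ^ 2)
        + A ^ 2 * s ^ (2 * lam - 3) * (2 * lam * (1 - lam) * log s - 1)) s := by
  have hlog : HasDerivAt log s⁻¹ s := hasDerivAt_log hs.ne'
  have hpow (p : ℝ) : HasDerivAt (fun x : ℝ => x ^ p) (p * s ^ (p - 1)) s :=
    hasDerivAt_rpow_const (Or.inl hs.ne')
  have hfirst :=
    (hpow (2 / lam - 2)).mul ((hasDerivAt_const s (lam + 2 * log A)).sub (hlog.const_mul 2))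
  have hsecond :=
    (hpow (2 * lam - 2)).mul ((hasDerivAt_const s 1).sub (hlog.const_mul (2 * lam)))
  have hIb := ((((hfirst.const_mul (A ^ (-(2 : ℝ) / lam))).neg.div_const lam).add
      (hsecond.const_mul (A ^ 2))).sub_const (2 * log A)).const_mul (1 / 2 : ℝ)
  refine (hIb.congr_deriv ?_).congr_of_eventuallyEq (.of_forall fun x => ?_)
  · have hshift (p : ℝ) : s ^ (p - 2) = s ^ (p - 3) * s := by
      rw [← rpow_add_one hs.ne']; ring_nf
    have hshift' (p : ℝ) : s ^ (p - 2 - 1) = s ^ (p - 3) := by ring_nf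
    rw [hshift', hshift', hshift, hshift]
    simp only [Pi.sub_apply]
    field_simp
    ring
  · simp only [Ib, Pi.add_apply, Pi.sub_apply, Pi.mul_apply, Pi.neg_apply]; ring

lemma sq_mul_rpow_eq (lam A s : ℝ) (hlam : lam ≠ 0) (hA : 0 < A) (hs : 0 < s) :
    A ^ 2 * s ^ (2 * lam - 3) =
      A ^ (-(2 : ℝ) / lam) * s ^ (2 / lam - 3) * (A / s ^ (1 - lam)) ^ (2 + 2 / lam) := by
  have hs_exp : s ^ (2 / lam - 3) / s ^ ((1 - lam) * (2 + 2 / lam)) = s ^ (2 * lam - 3) := by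
    rw [← rpow_sub hs]; congr 1; field_simp; ring
  have hA_exp : A ^ (-(2 : ℝ) / lam) * A ^ (2 + 2 / lam) = A ^ 2 := by
    rw [← rpow_add hA, ← rpow_natCast A 2]; congr 1; push_cast; field_simp; ring
  rw [div_rpow hA.le (rpow_nonneg hs.le _), ← rpow_mul hs.le, ← hs_exp, ← hA_exp]
  ring

lemma hasDerivAt_Ib_eq_mul_ibDerivNumerator (lam A : ℝ) {s : ℝ} (hlam : lam ≠ 0) (hA : 0 < A)
    (hs : 0 < s) :
    HasDerivAt (Ib lam A)
      (A ^ (-(2 : ℝ) / lam) * s ^ (2 / lam - 3) / lam ^ 2 *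
        ibDerivNumerator lam s (A / s ^ (1 - lam))) s := by
  convert hasDerivAt_Ib lam A hlam hs using 1
  have hlogt : log (A / s ^ (1 - lam)) = log A - (1 - lam) * log s := by
    rw [log_div hA.ne' (rpow_pos_of_pos hs _).ne', log_rpow hs]
  rw [ibDerivNumerator, hlogt, sq_mul_rpow_eq lam A s hlam hA hs]
  field_simp
  ring

lemma strictMonoOn_Ib_Icc {lam A r₁ r₂ : ℝ} (hlam : lam < 0) (hA : 0 < A) (hr₁ : 0 < r₁)
    (hr₂ : r₂ < exp (1 / (2 * lam * (1 - lam)))) (hAr₁ : A < r₁ ^ (1 - lam)) :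
    StrictMonoOn (Ib lam A) (Icc r₁ r₂) := by
  apply strictMonoOn_of_deriv_pos (convex_Icc r₁ r₂)
  · intro s hs
    exact (hasDerivAt_Ib lam A hlam.ne (hr₁.trans_le hs.1)).continuousAt.continuousWithinAt
  · rw [interior_Icc]
    rintro s ⟨hr₁s, hsr₂⟩
    have hs : 0 < s := hr₁.trans hr₁s
    have hAs : A < s ^ (1 - lam) :=
      hAr₁.trans_le (rpow_le_rpow hr₁.le hr₁s.le (by linarith))
    rw [(hasDerivAt_Ib_eq_mul_ibDerivNumerator lam A hlam.ne hA hs).deriv]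
    exact mul_pos (div_pos (by positivity) (sq_pos_of_neg hlam))
      (ibDerivNumerator_pos_of_lt_exp hlam hA hs (hsr₂.trans hr₂) hAs)

theorem Ib_deriv_pos_general
    (lam : ℝ) (hlam1 : lam < 0)
    (α : ℂ) (hα0 : 0 < ‖α‖) :
    let A : ℝ := ‖α‖
    let Ib : ℝ → ℝ := fun s =>
      (1 / 2) *
        (-(A ^ (-(2 : ℝ) / lam) * s ^ (2 / lam - 2) *
            (lam + 2 * Real.log A - 2 * Real.log s)) / lam
          + A ^ 2 * s ^ (2 * lam - 2) * (1 - 2 * lam * Real.log s)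
          - 2 * Real.log A)
    (∀ r : ℝ, 0 < r → r < Real.exp (1 / (2 * lam * (1 - lam))) →
      A < r ^ ((1 : ℝ) - lam) →
      let t : ℝ := A / r ^ ((1 : ℝ) - lam)
      0 < -(lam ^ 2) * (t ^ (2 + 2 / lam) - 1)
          + 2 * lam * (1 - lam) * (lam ^ 2 * t ^ (2 + 2 / lam) + 1) * Real.log r
          - 2 * (1 - lam) * Real.log t) ∧
    (∀ r₁ r₂ : ℝ, 0 < r₁ → r₁ < r₂ → r₂ < Real.exp (1 / (2 * lam * (1 - lam))) →
      A < r₁ ^ ((1 : ℝ) - lam) → Ib r₁ < Ib r₂) := by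
  intro A _
  exact ⟨fun r hr hre hAr => ibDerivNumerator_pos_of_lt_exp hlam1 hα0 hr hre hAr,
    fun r₁ r₂ hr₁ hr₁₂ hr₂ hAr₁ => strictMonoOn_Ib_Icc hlam1 hα0 hr₁ hr₂ hAr₁
      (left_mem_Icc.mpr hr₁₂.le) (right_mem_Icc.mpr hr₁₂.le) hr₁₂⟩

/-- For `λ ∈ [−1,0)`, `r ∈ (0, e^{1/(2λ(1−λ))})`, `0 < |α| < r^{1−λ}`, `t := |α|/r^{1−λ}`:
the expression `−λ²(t^{2+2/λ}−1) + 2λ(1−λ)(λ²t^{2+2/λ}+1)log r − 2(1−λ)log t`, which up to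
the positive factor `|α|^{−2/λ}r^{2/λ}/(λ²r³)` equals `dI_b/dr`, is strictly positive;
hence `I_b` is strictly increasing on `(0, e^{1/(2λ(1−λ))})` for such `α`. -/
theorem Ib_deriv_pos
    (lam : ℝ) (hlam0 : -1 ≤ lam) (hlam1 : lam < 0)
    (α : ℂ) (hα0 : 0 < ‖α‖) :
    let A : ℝ := ‖α‖
    let Ib : ℝ → ℝ := fun s =>
      (1 / 2) *
        (-(A ^ (-(2 : ℝ) / lam) * s ^ (2 / lam - 2) *
            (lam + 2 * Real.log A - 2 * Real.log s)) / lam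
          + A ^ 2 * s ^ (2 * lam - 2) * (1 - 2 * lam * Real.log s)
          - 2 * Real.log A)
    (∀ r : ℝ, 0 < r → r < Real.exp (1 / (2 * lam * (1 - lam))) →
      A < r ^ ((1 : ℝ) - lam) →
      let t : ℝ := A / r ^ ((1 : ℝ) - lam)
      0 < -(lam ^ 2) * (t ^ (2 + 2 / lam) - 1)
          + 2 * lam * (1 - lam) * (lam ^ 2 * t ^ (2 + 2 / lam) + 1) * Real.log r
          - 2 * (1 - lam) * Real.log t) ∧
    (∀ r₁ r₂ : ℝ, 0 < r₁ → r₁ < r₂ → r₂ < Real.exp (1 / (2 * lam * (1 - lam))) →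
      A < r₁ ^ ((1 : ℝ) - lam) → Ib r₁ < Ib r₂) :=
  Ib_deriv_pos_general lam hlam1 α hα0
end
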